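/- Let 𝒞 be a Fraïssé class and let U be its Fraïssé limit. Then U has a universal homogeneous endomorphism if and only if 𝒞 has the amalgamated extension property and the homo amalgamation property (HAP). -/

import Mathlib

universe u v w

open FirstOrder FirstOrder.Language CategoryTheory

namespace UHomog

variable (L : FirstOrder.Language.{u, v})

/-- The class `𝒞̄` of countable structures whose age is contained in `K`. -/
def InBar (K : Set (Bundled.{w} L.Structure)) (A : Type w) [L.Structure A] : Prop :=
  Countable A ∧ L.age A ⊆ K

/-- A homomorphism `u : U → T` is universal within `𝒞̄ = K̄` if every homomorphism from a member
of `K̄` to `T` factors through an embedding into `U`. -/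
def IsUniversalHom (K : Set (Bundled.{w} L.Structure)) {U T : Type w}
    [L.Structure U] [L.Structure T] (u : U →[L] T) : Prop :=
  ∀ A : Bundled.{w} L.Structure, InBar L K A → ∀ h : A →[L] T,
    ∃ ι : A ↪[L] U, ∀ a : A, u (ι a) = h a

/-- A homomorphism `u : U → T` is homogeneous if every embedding of a finitely generated
substructure of `U` into `U` compatible with `u` extends to an automorphism of `U` compatible
with `u`. -/
def IsHomogeneousHom {U T : Type w} [L.Structure U] [L.Structure T] (u : U →[L] T) : Prop :=
  ∀ S : L.Substructure U, S.FG → ∀ ι : S ↪[L] U,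
    (∀ s : S, u (ι s) = u s) →
    ∃ α : U ≃[L] U, (∀ x : U, u (α x) = u x) ∧ ∀ s : S, α s = ι s

/-- An age: a class of finitely generated structures with countably many isomorphism types,
closed under isomorphism, with the hereditary property and the joint embedding property. -/
def IsAge (K : Set (Bundled.{w} L.Structure)) : Prop :=
  K.Nonempty ∧
  (∀ M : Bundled.{w} L.Structure, M ∈ K → Structure.FG L M) ∧
  (∀ M N : Bundled.{w} L.Structure, Nonempty (M ≃[L] N) → (M ∈ K ↔ N ∈ K)) ∧
  (∃ S : Set (Bundled.{w} L.Structure), S.Countable ∧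
    ∀ M ∈ K, ∃ N ∈ S, Nonempty (M ≃[L] N)) ∧
  Hereditary K ∧ JointEmbedding K

/-- The square `g₁ ∘ f₁ = g₂ ∘ f₂` is a pushout square in the category of countable structures
with age contained in `K`, with homomorphisms as morphisms. -/
def IsPushoutSquare (K : Set (Bundled.{w} L.Structure)) {A B₁ B₂ C : Type w}
    [L.Structure A] [L.Structure B₁] [L.Structure B₂] [L.Structure C]
    (f₁ : A ↪[L] B₁) (f₂ : A ↪[L] B₂) (g₁ : B₁ →[L] C) (g₂ : B₂ →[L] C) : Prop :=
  g₁.comp f₁.toHom = g₂.comp f₂.toHom ∧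
  ∀ D : Bundled.{w} L.Structure, InBar L K D → ∀ (k₁ : B₁ →[L] D) (k₂ : B₂ →[L] D),
    k₁.comp f₁.toHom = k₂.comp f₂.toHom →
    ∃! m : C →[L] D, m.comp g₁ = k₁ ∧ m.comp g₂ = k₂

/-- A strict Fraïssé class: a Fraïssé class in which every span of embeddings can be completed to
a canonical (pushout) amalgam. -/
def IsStrictFraisse (K : Set (Bundled.{w} L.Structure)) : Prop :=
  IsFraisse K ∧
  ∀ A B₁ B₂ : Bundled.{w} L.Structure, A ∈ K → B₁ ∈ K → B₂ ∈ K →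
    ∀ (f₁ : A ↪[L] B₁) (f₂ : A ↪[L] B₂),
      ∃ (C : Bundled.{w} L.Structure) (g₁ : B₁ →[L] C) (g₂ : B₂ →[L] C),
        C ∈ K ∧ IsPushoutSquare L K f₁ f₂ g₁ g₂

/-- A Fraïssé class `K₀` is free in the strict Fraïssé class `K` if it is closed with respect to
canonical (pushout) amalgams in `K`. -/
def IsFreeIn (K₀ K : Set (Bundled.{w} L.Structure)) : Prop :=
  K₀ ⊆ K ∧
  ∀ A B₁ B₂ : Bundled.{w} L.Structure, A ∈ K₀ → B₁ ∈ K₀ → B₂ ∈ K₀ →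
    ∀ (f₁ : A ↪[L] B₁) (f₂ : A ↪[L] B₂),
      ∃ (C : Bundled.{w} L.Structure) (g₁ : B₁ →[L] C) (g₂ : B₂ →[L] C),
        C ∈ K₀ ∧ IsPushoutSquare L K f₁ f₂ g₁ g₂

/-- The amalgamated extension property. -/
def AmalgamatedExtension (K : Set (Bundled.{w} L.Structure)) : Prop :=
  ∀ A B₁ B₂ T : Bundled.{w} L.Structure, A ∈ K → B₁ ∈ K → B₂ ∈ K → T ∈ K →
    ∀ (f₁ : A ↪[L] B₁) (f₂ : A ↪[L] B₂) (h₁ : B₁ →[L] T) (h₂ : B₂ →[L] T),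
      h₁.comp f₁.toHom = h₂.comp f₂.toHom →
      ∃ (C T' : Bundled.{w} L.Structure) (g₁ : B₁ ↪[L] C) (g₂ : B₂ ↪[L] C)
        (k : T ↪[L] T') (h : C →[L] T'),
        C ∈ K ∧ T' ∈ K ∧ g₁.comp f₁ = g₂.comp f₂ ∧
        h.comp g₁.toHom = k.toHom.comp h₁ ∧ h.comp g₂.toHom = k.toHom.comp h₂

/-- The homo amalgamation property (HAP). -/
def HAP (K : Set (Bundled.{w} L.Structure)) : Prop :=
  ∀ A B₁ B₂ : Bundled.{w} L.Structure, A ∈ K → B₁ ∈ K → B₂ ∈ K →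
    ∀ (f₁ : A ↪[L] B₁) (f₂ : A →[L] B₂),
      ∃ (C : Bundled.{w} L.Structure) (g₁ : B₁ →[L] C) (g₂ : B₂ ↪[L] C),
        C ∈ K ∧ g₁.comp f₁.toHom = g₂.toHom.comp f₂

/-- A homomorphism `r : A → B` is a retraction if it has a section. -/
def IsRetraction {A B : Type w} [L.Structure A] [L.Structure B] (r : A →[L] B) : Prop :=
  ∃ ι : B →[L] A, ∀ b : B, r (ι b) = b

end UHomog

/-!
Both directions revolve around an extension property of `u`: whenever `e : A ↪ B` with `A`
finitely generated and `B ∈ K`, `h : B → U`, and `ι₀ : A ↪ U` satisfies `u ∘ ι₀ = h ∘ e`, there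
is `ι : B ↪ U` with `ι ∘ e = ι₀` and `u ∘ ι = h`.

If `u` is universal, HAP follows by lifting `A → B₂ ↪ U` through `u` and extending the lift
along `A ↪ B₁` inside the homogeneous `U`. If `u` is moreover homogeneous, the amalgamated
extension property follows by lifting `h₁` and `h₂` through `u` and moving the first copy of
`A` onto the second by an automorphism `α` with `u ∘ α = u`.

Conversely, `u` is built as the union of a chain of partial endomorphisms of `U` with finitely
generated domains: HAP enlarges the domain of such a map, and the amalgamated extension
property solves one instance of the extension problem. As `U` is countable there are only
countably many instances with `A, B ≤ U`, which suffice up to isomorphism, so a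
Rasiowa–Sikorski chain gives `u` the extension property. Universality and homogeneity of `u`
then follow by a forth, respectively back-and-forth, argument on finitely generated partial
isomorphisms `f` with `u ∘ f = h`.
-/

theorem Order.exists_monotone_seq_forall_exists_mem {P ι : Type*} [Preorder P] [Countable ι]
    (p : P) {D : ι → Set P} (hD : ∀ i, IsCofinal (D i)) :
    ∃ c : ℕ → P, Monotone c ∧ c 0 = p ∧ ∀ i, ∃ n, c n ∈ D i := by
  have := Encodable.ofCountable ι
  let 𝒟 : ι → Order.Cofinal P := fun i => ⟨D i, hD i⟩
  exact ⟨Order.sequenceOfCofinals p 𝒟, Order.sequenceOfCofinals.monotone p 𝒟, rfl,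
    fun i => ⟨_, Order.sequenceOfCofinals.encode_mem p 𝒟 i⟩⟩

namespace FirstOrder.Language

open Substructure

variable {L : Language.{u, v}} {M N : Type w} [L.Structure M] [L.Structure N]

instance Substructure.subsingleton_hom_bot :
    Subsingleton ((⊥ : L.Substructure M) →[L] N) where
  allEq g₁ g₂ := Hom.eq_of_eqOn_top fun x _ => by
    have hle : (⊥ : L.Substructure M) ≤ (g₁.eqLocus g₂).map (⊥ : L.Substructure M).subtype.toHom :=
      bot_le
    obtain ⟨y, hy, hyx⟩ := hle x.2
    rwa [← Subtype.ext hyx]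

namespace PartialEquiv

theorem toEmbeddingOfEqTop_apply_of_le {f g : M ≃ₚ[L] N} (hg : g.dom = ⊤) (h : f ≤ g) {x : M}
    (hx : x ∈ f.dom) : toEmbeddingOfEqTop hg x = f.toEquiv ⟨x, hx⟩ := by
  rw [toEmbeddingOfEqTop_apply]
  exact congrArg Subtype.val (toEquiv_inclusion_apply h ⟨x, hx⟩)

theorem toEquivOfEqTop_apply_of_le {f g : M ≃ₚ[L] N} (hdom : g.dom = ⊤) (hcod : g.cod = ⊤)
    (h : f ≤ g) {x : M} (hx : x ∈ f.dom) : toEquivOfEqTop hdom hcod x = f.toEquiv ⟨x, hx⟩ := by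
  rw [← Equiv.coe_toEmbedding, toEquivOfEqTop_toEmbedding]
  exact toEmbeddingOfEqTop_apply_of_le hdom h hx

theorem exists_le_forall_exists_le_mem {ι : Type*} [Countable ι] {P : (M ≃ₚ[L] N) → Prop}
    {f₀ : M ≃ₚ[L] N} (hf₀ : P f₀) {D : ι → Set (M ≃ₚ[L] N)}
    (hD : ∀ i f, P f → ∃ g, P g ∧ f ≤ g ∧ g ∈ D i) :
    ∃ F : M ≃ₚ[L] N, f₀ ≤ F ∧ ∀ i, ∃ g, P g ∧ g ≤ F ∧ g ∈ D i := by
  obtain ⟨c, hc, hc0, hcD⟩ := Order.exists_monotone_seq_forall_exists_mem (⟨f₀, hf₀⟩ : {f // P f})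
    (D := fun i => {g | g.1 ∈ D i}) fun i f => by
      obtain ⟨g, hg, hfg, hgD⟩ := hD i f.1 f.2
      exact ⟨⟨g, hg⟩, hgD, hfg⟩
  let S : ℕ →o M ≃ₚ[L] N := ⟨fun n => (c n).1, hc⟩
  refine ⟨DirectLimit.partialEquivLimit S, ?_, fun i => ?_⟩
  · convert DirectLimit.le_partialEquivLimit S 0
    exact congrArg Subtype.val hc0.symm
  · obtain ⟨n, hn⟩ := hcD i
    exact ⟨(c n).1, (c n).2, DirectLimit.le_partialEquivLimit S n, hn⟩

theorem exists_embedding_of_forth [Countable M] {P : (M ≃ₚ[L] N) → Prop} {f₀ : M ≃ₚ[L] N}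
    (hf₀ : P f₀) (forth : ∀ f, P f → ∀ m, ∃ g, P g ∧ f ≤ g ∧ m ∈ g.dom) :
    ∃ e : M ↪[L] N, ∀ m, ∃ f, P f ∧ ∃ hm : m ∈ f.dom, e m = f.toEquiv ⟨m, hm⟩ := by
  obtain ⟨F, -, hF⟩ := exists_le_forall_exists_le_mem hf₀ (D := fun m => {g | m ∈ g.dom})
    fun m f hf => forth f hf m
  have hdom : F.dom = ⊤ := eq_top_iff.2 fun m _ =>
    have ⟨_, _, hgF, hm⟩ := hF m
    dom_le_dom hgF hm
  refine ⟨toEmbeddingOfEqTop hdom, fun m => ?_⟩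
  obtain ⟨g, hg, hgF, hm⟩ := hF m
  exact ⟨g, hg, hm, toEmbeddingOfEqTop_apply_of_le hdom hgF hm⟩

theorem exists_equiv_of_back_and_forth [Countable M] [Countable N] {P : (M ≃ₚ[L] N) → Prop}
    {f₀ : M ≃ₚ[L] N} (hf₀ : P f₀) (forth : ∀ f, P f → ∀ m, ∃ g, P g ∧ f ≤ g ∧ m ∈ g.dom)
    (back : ∀ f, P f → ∀ n, ∃ g, P g ∧ f ≤ g ∧ n ∈ g.cod) :
    ∃ α : M ≃[L] N, (∀ m (hm : m ∈ f₀.dom), α m = f₀.toEquiv ⟨m, hm⟩) ∧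
      ∀ m, ∃ f, P f ∧ ∃ hm : m ∈ f.dom, α m = f.toEquiv ⟨m, hm⟩ := by
  obtain ⟨F, hf₀F, hF⟩ := exists_le_forall_exists_le_mem hf₀
    (D := Sum.elim (fun m => {g | m ∈ g.dom}) (fun n => {g | n ∈ g.cod}))
    fun i f hf => i.rec (forth f hf) (back f hf)
  have hdom : F.dom = ⊤ := eq_top_iff.2 fun m _ =>
    have ⟨_, _, hgF, hm⟩ := hF (.inl m)
    dom_le_dom hgF hm
  have hcod : F.cod = ⊤ := eq_top_iff.2 fun n _ =>
    have ⟨_, _, hgF, hn⟩ := hF (.inr n)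
    cod_le_cod hgF hn
  refine ⟨toEquivOfEqTop hdom hcod, fun m hm => toEquivOfEqTop_apply_of_le hdom hcod hf₀F hm,
    fun m => ?_⟩
  obtain ⟨g, hg, hgF, hm⟩ := hF (.inl m)
  exact ⟨g, hg, hm, toEquivOfEqTop_apply_of_le hdom hcod hgF hm⟩

end PartialEquiv

variable (L M N) in
structure PartialHom where
  dom : L.Substructure M
  toHom : dom →[L] N

namespace PartialHom

def MapsAlong (p : PartialHom L M N) {X : Type*} (j : X → M) (g : X → N) : Prop :=
  ∃ hj : ∀ x, j x ∈ p.dom, ∀ x, p.toHom ⟨j x, hj x⟩ = g x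

theorem MapsAlong.trans {p q : PartialHom L M N} {X : Type*} {j : X → M} {g : X → N}
    (hpq : q.MapsAlong ((↑) : p.dom → M) p.toHom) (hp : p.MapsAlong j g) : q.MapsAlong j g :=
  ⟨fun x => hpq.1 ⟨j x, hp.1 x⟩, fun x => (hpq.2 ⟨j x, hp.1 x⟩).trans (hp.2 x)⟩

instance : Preorder (PartialHom L M N) where
  le p q := q.MapsAlong ((↑) : p.dom → M) p.toHom
  le_refl p := ⟨fun x => x.2, fun _ => rfl⟩
  le_trans _ _ _ hpq hqr := hqr.trans hpq

theorem mapsAlong_iff {p : PartialHom L M N} {u : M → N} (hu : ∀ x : p.dom, u x = p.toHom x)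
    {X : Type*} {j : X → M} {g : X → N} :
    p.MapsAlong j g ↔ (∀ x, j x ∈ p.dom) ∧ ∀ x, u (j x) = g x :=
  ⟨fun ⟨hj, hg⟩ => ⟨hj, fun x => (hu ⟨j x, hj x⟩).trans (hg x)⟩,
    fun ⟨hj, hg⟩ => ⟨hj, fun x => (hu ⟨j x, hj x⟩).symm.trans (hg x)⟩⟩

noncomputable def ofEmbedding {C : Type*} [L.Structure C] (j : C ↪[L] M) (g : C →[L] N) :
    PartialHom L M N :=
  ⟨j.toHom.range, g.comp j.equivRange.symm.toHom⟩

theorem mapsAlong_ofEmbedding {C X : Type*} [L.Structure C] (j : C ↪[L] M) (g : C →[L] N)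
    {j' : X → M} {g' : X → N} (φ : X → C) (hj : ∀ x, j (φ x) = j' x)
    (hg : ∀ x, g (φ x) = g' x) : (ofEmbedding j g).MapsAlong j' g' := by
  obtain rfl : (j ∘ φ) = j' := funext hj
  obtain rfl : (g ∘ φ) = g' := funext hg
  refine ⟨fun x => Hom.mem_range_self j.toHom (φ x), fun x => ?_⟩
  have hx : (⟨j (φ x), Hom.mem_range_self j.toHom (φ x)⟩ : j.toHom.range) = j.equivRange (φ x) :=
    Subtype.ext (Embedding.equivRange_apply j (φ x)).symm
  change g (j.equivRange.symm ⟨j (φ x), Hom.mem_range_self j.toHom (φ x)⟩) = g (φ x)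
  rw [hx, Equiv.symm_apply_apply]

theorem dom_mono : Monotone (dom : PartialHom L M N → L.Substructure M) :=
  fun _ _ hpq x hx => hpq.1 ⟨x, hx⟩

theorem exists_hom_of_monotone {c : ℕ → PartialHom L M N} (hc : Monotone c)
    (hcover : ∀ x, ∃ n, x ∈ (c n).dom) :
    ∃ u : M →[L] N, ∀ n (x : (c n).dom), u x = (c n).toHom x := by
  choose idx hidx using hcover
  have agree : ∀ n x (hx : x ∈ (c n).dom),
      (c (idx x)).toHom ⟨x, hidx x⟩ = (c n).toHom ⟨x, hx⟩ := by
    intro n x hx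
    rcases le_total (idx x) n with h | h
    · exact ((hc h).2 ⟨x, hidx x⟩).symm
    · exact (hc h).2 ⟨x, hx⟩
  have tuple : ∀ {k} (x : Fin k → M), ∃ n, ∀ i, x i ∈ (c n).dom := fun x =>
    ⟨Finset.univ.sup (idx ∘ x), fun i =>
      dom_mono (hc (Finset.le_sup (Finset.mem_univ i))) (hidx (x i))⟩
  refine ⟨{ toFun := fun x => (c (idx x)).toHom ⟨x, hidx x⟩, map_fun' := ?_, map_rel' := ?_ },
    fun n x => agree n x x.2⟩
  · intro k f x
    obtain ⟨n, hn⟩ := tuple x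
    rw [agree n _ ((c n).dom.fun_mem f x hn)]
    exact ((c n).toHom.map_fun f (fun i => ⟨x i, hn i⟩)).trans
      (congrArg _ (funext fun i => (agree n _ (hn i)).symm))
  · intro k r x hx
    obtain ⟨n, hn⟩ := tuple x
    convert (c n).toHom.map_rel r (fun i => ⟨x i, hn i⟩) hx using 2
    exact funext fun i => agree n _ (hn i)

end PartialHom

end FirstOrder.Language

namespace FirstOrder.Language.IsFraisseLimit

variable {L : Language.{u, v}} [Countable (Σ l, L.Functions l)] {K : Set (Bundled.{w} L.Structure)}
  {U : Type w} [L.Structure U] [Countable U]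

theorem mem_of_fg (hU : IsFraisseLimit K U) {S : L.Substructure U} (hS : S.FG) :
    Bundled.mk S ∈ K :=
  hU.age ▸ age.fg_substructure hS

theorem mem_of_embedding (hU : IsFraisseLimit K U) {A : Bundled.{w} L.Structure}
    (hA : Structure.FG L A) (f : A ↪[L] U) : A ∈ K :=
  hU.age ▸ ⟨hA, ⟨f⟩⟩

theorem fg_of_mem (hU : IsFraisseLimit K U) {A : Bundled.{w} L.Structure} (hA : A ∈ K) :
    Structure.FG L A :=
  (hU.age ▸ hA : A ∈ L.age U).1

theorem nonempty_embedding (hU : IsFraisseLimit K U) {A : Bundled.{w} L.Structure} (hA : A ∈ K) :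
    Nonempty (A ↪[L] U) :=
  (hU.age ▸ hA : A ∈ L.age U).2

theorem exists_embedding_comp_eq (hU : IsFraisseLimit K U) {A : Type w} [L.Structure A]
    (hA : Structure.FG L A) {C : Bundled.{w} L.Structure} (hC : C ∈ K) (f : A ↪[L] U)
    (g : A ↪[L] C) : ∃ j : C ↪[L] U, ∀ a, j (g a) = f a := by
  have := hU.nonempty_embedding hC
  obtain ⟨j, hj⟩ := hU.ultrahomogeneous.extend_embedding hA f g
  exact ⟨j, fun a => (DFunLike.congr_fun hj a).symm⟩

theorem inBar_of_mem (hU : IsFraisseLimit K U) {A : Bundled.{w} L.Structure} (hA : A ∈ K) :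
    UHomog.InBar L K A :=
  have ⟨e⟩ := hU.nonempty_embedding hA
  ⟨Structure.cg_iff_countable.1 (hU.fg_of_mem hA).cg, hU.age ▸ e.age_subset_age⟩

end FirstOrder.Language.IsFraisseLimit

namespace UHomog

open Substructure

section

variable {L : FirstOrder.Language.{u, v}} {U : Type w} [L.Structure U]

theorem IsHomogeneousHom.exists_equiv_comp_eq {u : U →[L] U} (hu : IsHomogeneousHom L u)
    {A : Type w} [L.Structure A] (hA : Structure.FG L A) (a₁ a₂ : A ↪[L] U)
    (h : ∀ x, u (a₁ x) = u (a₂ x)) :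
    ∃ α : U ≃[L] U, (∀ y, u (α y) = u y) ∧ ∀ x, α (a₁ x) = a₂ x := by
  obtain ⟨α, hαu, hα⟩ := hu a₁.toHom.range (hA.range a₁.toHom)
    (a₂.comp a₁.equivRange.symm.toEmbedding) fun s => by
      have hs := h (a₁.equivRange.symm s)
      rw [← Embedding.equivRange_apply, Language.Equiv.apply_symm_apply] at hs
      exact hs.symm
  refine ⟨α, hαu, fun x => ?_⟩
  simpa [Embedding.equivRange_apply] using hα (a₁.equivRange x)

def HasExtensionProperty (K : Set (Bundled.{w} L.Structure)) (u : U →[L] U) : Prop :=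
  ∀ A B : Bundled.{w} L.Structure, Structure.FG L A → B ∈ K →
    ∀ (e : A ↪[L] B) (h : B →[L] U) (ι₀ : A ↪[L] U), (∀ a, u (ι₀ a) = h (e a)) →
      ∃ ι : B ↪[L] U, (∀ a, ι (e a) = ι₀ a) ∧ ∀ b, u (ι b) = h b

def IsFGLift (u : U →[L] U) {A : Type w} [L.Structure A] (h : A →[L] U) (f : A ≃ₚ[L] U) :
    Prop :=
  f.dom.FG ∧ ∀ x : f.dom, u (f.toEquiv x) = h x

theorem IsFGLift.symm {u : U →[L] U} {f : U ≃ₚ[L] U} (hf : IsFGLift u u f) :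
    IsFGLift u u f.symm := by
  refine ⟨f.dom_fg_iff_cod_fg.1 hf.1, fun y => ?_⟩
  obtain ⟨x, rfl⟩ := f.toEquiv.surjective y
  simpa using (hf.2 x).symm

theorem HasExtensionProperty.exists_isFGLift_le {K : Set (Bundled.{w} L.Structure)}
    {u : U →[L] U} (hu : HasExtensionProperty K u) {A : Type w} [L.Structure A]
    (hA : L.age A ⊆ K) (h : A →[L] U) {f : A ≃ₚ[L] U} (hf : IsFGLift u h f) (a : A) : ∃ g, IsFGLift u h g ∧ f ≤ g ∧ a ∈ g.dom := by
  let B := f.dom ⊔ closure L {a}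
  have hB : B.FG := hf.1.sup (fg_closure_singleton a)
  obtain ⟨ι, hιe, hιh⟩ := hu (Bundled.mk f.dom) (Bundled.mk B) ((fg_iff_structure_fg _).1 hf.1)
    (hA (age.fg_substructure hB)) (inclusion le_sup_left) (h.comp B.subtype.toHom) f.toEmbedding
    hf.2
  refine ⟨⟨B, ι.toHom.range, ι.equivRange⟩, ⟨hB, fun x => ?_⟩,
    ⟨le_sup_left, Embedding.ext fun x => ?_⟩, (le_sup_right : _ ≤ B) (subset_closure rfl)⟩
  · simpa [Embedding.equivRange_apply] using hιh x
  · simpa [Embedding.equivRange_apply] using hιe x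

end

variable {L : FirstOrder.Language.{u, v}} [Countable (Σ l, L.Functions l)]
  {K : Set (Bundled.{w} L.Structure)} {U : Type w} [L.Structure U] [Countable U]

theorem hap_of_isUniversalHom (hU : IsFraisseLimit K U) {u : U →[L] U}
    (hu : IsUniversalHom L K u) : HAP L K := by
  intro A B₁ B₂ hA hB₁ hB₂ f₁ f₂
  obtain ⟨e₂⟩ := hU.nonempty_embedding hB₂
  obtain ⟨ιA, hιA⟩ := hu A (hU.inBar_of_mem hA) (e₂.toHom.comp f₂)
  obtain ⟨j, hj⟩ := hU.exists_embedding_comp_eq (hU.fg_of_mem hA) hB₁ ιA f₁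
  let C := (u.comp j.toHom).range ⊔ e₂.toHom.range
  refine ⟨Bundled.mk C,
    Hom.codRestrict C (u.comp j.toHom) fun b => (le_sup_left : _ ≤ C) (Hom.mem_range_self _ b),
    Embedding.codRestrict C e₂ fun b => (le_sup_right : _ ≤ C) (Hom.mem_range_self _ b),
    hU.mem_of_fg (((hU.fg_of_mem hB₁).range _).sup ((hU.fg_of_mem hB₂).range _)), ?_⟩
  ext a
  change u (j (f₁ a)) = e₂ (f₂ a)
  rw [hj, hιA]
  rfl

theorem amalgamatedExtension_of_isUniversalHom (hU : IsFraisseLimit K U) {u : U →[L] U}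
    (huniv : IsUniversalHom L K u) (hhomog : IsHomogeneousHom L u) :
    AmalgamatedExtension L K := by
  intro A B₁ B₂ T hA hB₁ hB₂ hT f₁ f₂ h₁ h₂ hcomm
  obtain ⟨eT⟩ := hU.nonempty_embedding hT
  obtain ⟨ι₁, hι₁⟩ := huniv B₁ (hU.inBar_of_mem hB₁) (eT.toHom.comp h₁)
  obtain ⟨ι₂, hι₂⟩ := huniv B₂ (hU.inBar_of_mem hB₂) (eT.toHom.comp h₂)
  obtain ⟨α, hαu, hα⟩ := hhomog.exists_equiv_comp_eq (hU.fg_of_mem hA) (ι₁.comp f₁)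
    (ι₂.comp f₂) fun a => by
      simp only [Embedding.comp_apply, hι₁, hι₂, Hom.comp_apply]
      exact congrArg eT.toHom (DFunLike.congr_fun hcomm a)
  let g₁ := α.toEmbedding.comp ι₁
  let C := g₁.toHom.range ⊔ ι₂.toHom.range
  have hC : Structure.FG L C :=
    (fg_iff_structure_fg _).1 (((hU.fg_of_mem hB₁).range _).sup ((hU.fg_of_mem hB₂).range _))
  let uC := u.comp C.subtype.toHom
  let T' := eT.toHom.range ⊔ uC.range
  refine ⟨Bundled.mk C, Bundled.mk T',
    Embedding.codRestrict C g₁ fun b => (le_sup_left : _ ≤ C) (Hom.mem_range_self _ b),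
    Embedding.codRestrict C ι₂ fun b => (le_sup_right : _ ≤ C) (Hom.mem_range_self _ b),
    Embedding.codRestrict T' eT fun t => (le_sup_left : _ ≤ T') (Hom.mem_range_self _ t),
    Hom.codRestrict T' uC fun c => (le_sup_right : _ ≤ T') (Hom.mem_range_self _ c),
    hU.mem_of_fg (((hU.fg_of_mem hB₁).range _).sup ((hU.fg_of_mem hB₂).range _)),
    hU.mem_of_fg (((hU.fg_of_mem hT).range _).sup (hC.range _)), ?_, ?_, ?_⟩
  · ext a
    exact hα a
  · ext b
    change u (α (ι₁ b)) = eT (h₁ b)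
    rw [hαu, hι₁]
    rfl
  · ext b
    change u (ι₂ b) = eT (h₂ b)
    rw [hι₂]
    rfl

theorem exists_partialHom_le_of_hap (hU : IsFraisseLimit K U) (hap : HAP L K)
    {p : PartialHom L U U} (hp : p.dom.FG) {T : L.Substructure U} (hT : T.FG) :
    ∃ q : PartialHom L U U, p ≤ q ∧ q.dom.FG ∧ T ≤ q.dom := by
  let R := p.toHom.range
  have hR : R.FG := ((fg_iff_structure_fg _).1 hp).range _
  obtain ⟨C, g₁, g₂, hC, hcomm⟩ := hap (Bundled.mk p.dom) (Bundled.mk ↥(p.dom ⊔ T))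
    (Bundled.mk R) (hU.mem_of_fg hp) (hU.mem_of_fg (hp.sup hT)) (hU.mem_of_fg hR)
    (inclusion le_sup_left) (Hom.codRestrict R p.toHom (Hom.mem_range_self _))
  obtain ⟨j, hj⟩ := hU.exists_embedding_comp_eq ((fg_iff_structure_fg _).1 hR) hC R.subtype g₂
  refine ⟨⟨p.dom ⊔ T, j.toHom.comp g₁⟩,
    ⟨fun x => (le_sup_left : p.dom ≤ p.dom ⊔ T) x.2, fun x => ?_⟩, hp.sup hT, le_sup_right⟩
  have hx := DFunLike.congr_fun hcomm x
  simp only [Hom.comp_apply, Embedding.coe_toHom] at hx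
  change j (g₁ (inclusion le_sup_left x)) = p.toHom x
  rw [hx, hj]
  rfl

theorem exists_partialHom_le_of_amalgamatedExtension (hU : IsFraisseLimit K U)
    (aep : AmalgamatedExtension L K) {p : PartialHom L U U} (hp : p.dom.FG)
    {A B : Bundled.{w} L.Structure} (hA : Structure.FG L A) (hB : B ∈ K) (e : A ↪[L] B)
    (h : B →[L] U) (ι₀ : A ↪[L] U) (hι₀ : p.MapsAlong ι₀ (h ∘ e)) :
    ∃ q : PartialHom L U U, p ≤ q ∧ q.dom.FG ∧
      ∃ ι : B ↪[L] U, (∀ a, ι (e a) = ι₀ a) ∧ q.MapsAlong ι h := by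
  obtain ⟨hmem, hval⟩ := hι₀
  let T := p.toHom.range ⊔ h.range
  have hT : Structure.FG L T := (fg_iff_structure_fg _).1
    ((((fg_iff_structure_fg _).1 hp).range _).sup ((hU.fg_of_mem hB).range _))
  obtain ⟨C, T', g₁, g₂, k, η, hC, hT', hg, hη₁, hη₂⟩ :=
    aep A (Bundled.mk p.dom) B (Bundled.mk T) (hU.mem_of_embedding hA ι₀) (hU.mem_of_fg hp) hB
      (hU.mem_of_fg ((fg_iff_structure_fg _).2 hT)) (Embedding.codRestrict p.dom ι₀ hmem) e
      (Hom.codRestrict T p.toHom fun x => (le_sup_left : _ ≤ T) (Hom.mem_range_self _ x))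
      (Hom.codRestrict T h fun b => (le_sup_right : _ ≤ T) (Hom.mem_range_self _ b))
      (by ext a; exact hval a)
  obtain ⟨jT, hjT⟩ := hU.exists_embedding_comp_eq hT hT' T.subtype k
  obtain ⟨jC, hjC⟩ := hU.exists_embedding_comp_eq ((fg_iff_structure_fg _).1 hp) hC
    p.dom.subtype g₁
  have hT₁ : ∀ x, jT (η (g₁ x)) = p.toHom x := fun x => by
    simpa [hjT] using congrArg jT (DFunLike.congr_fun hη₁ x)
  have hT₂ : ∀ b, jT (η (g₂ b)) = h b := fun b => by
    simpa [hjT] using congrArg jT (DFunLike.congr_fun hη₂ b)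
  have hC₀ : ∀ a, jC (g₂ (e a)) = ι₀ a := fun a => by
    simpa [hjC] using congrArg jC (DFunLike.congr_fun hg a).symm
  exact ⟨.ofEmbedding jC (jT.toHom.comp η),
    PartialHom.mapsAlong_ofEmbedding _ _ g₁ hjC hT₁, (hU.fg_of_mem hC).range _, jC.comp g₂, hC₀,
    PartialHom.mapsAlong_ofEmbedding _ _ g₂ (fun _ => rfl) hT₂⟩

theorem hasExtensionProperty_of_substructures (hU : IsFraisseLimit K U) {u : U →[L] U}
    (hu : ∀ A B : L.Substructure U, A.FG → B.FG → ∀ (e : A ↪[L] B) (h : B →[L] U),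
      (∀ a : A, u a = h (e a)) → ∃ ι : B ↪[L] U, (∀ a, ι (e a) = a) ∧ ∀ b, u (ι b) = h b) :
    HasExtensionProperty K u := by
  intro A B hA hB e h ι₀ hι₀
  obtain ⟨eB⟩ := hU.nonempty_embedding hB
  let ψ := ι₀.equivRange
  let φ := eB.equivRange
  obtain ⟨ι, hιe, hιh⟩ := hu ι₀.toHom.range eB.toHom.range (hA.range _)
    ((hU.fg_of_mem hB).range _) (φ.toEmbedding.comp (e.comp ψ.symm.toEmbedding))
    (h.comp φ.symm.toHom) fun a => by
      simp only [Hom.comp_apply, Embedding.comp_apply, Language.Equiv.coe_toHom,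
        Language.Equiv.coe_toEmbedding, Language.Equiv.symm_apply_apply]
      rw [← hι₀, ← Embedding.equivRange_apply, Language.Equiv.apply_symm_apply]
  exact ⟨ι.comp φ.toEmbedding, fun a => by simpa [φ, ψ] using hιe (ψ a),
    fun b => by simpa [φ] using hιh (φ b)⟩

theorem exists_partialHom_le_solving (hU : IsFraisseLimit K U) (hap : HAP L K)
    (aep : AmalgamatedExtension L K) {p : PartialHom L U U} (hp : p.dom.FG)
    {A B : L.Substructure U} (hA : A.FG) (hB : B.FG) (e : A ↪[L] B) (h : B →[L] U) :
    ∃ q : PartialHom L U U, p ≤ q ∧ q.dom.FG ∧ A ≤ q.dom ∧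
      (q.MapsAlong ((↑) : A → U) (h ∘ e) →
        ∃ ι : B ↪[L] U, (∀ a, ι (e a) = a) ∧ q.MapsAlong ι h) := by
  obtain ⟨q, hpq, hq, hAq⟩ := exists_partialHom_le_of_hap hU hap hp hA
  by_cases hqA : q.MapsAlong ((↑) : A → U) (h ∘ e)
  · obtain ⟨r, hqr, hr, ι, hιe, hι⟩ := exists_partialHom_le_of_amalgamatedExtension hU aep hq
      (A := Bundled.mk A) (B := Bundled.mk B) ((fg_iff_structure_fg _).1 hA) (hU.mem_of_fg hB)
      e h A.subtype hqA
    exact ⟨r, hpq.trans hqr, hr, hAq.trans (PartialHom.dom_mono hqr), fun _ => ⟨ι, hιe, hι⟩⟩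
  · exact ⟨q, hpq, hq, hAq, fun hqA' => (hqA hqA').elim⟩

theorem exists_hasExtensionProperty (hU : IsFraisseLimit K U) (hap : HAP L K)
    (aep : AmalgamatedExtension L K) : ∃ u : U →[L] U, HasExtensionProperty K u := by
  let Task := Σ A B : {S : L.Substructure U // S.FG}, (A.1 ↪[L] B.1) × (B.1 →[L] U)
  have : ∀ S : {S : L.Substructure U // S.FG}, Structure.FG L S.1 :=
    fun S => (fg_iff_structure_fg _).1 S.2
  -- Once `A` lies in the domain of `p`, whether `p` agrees with `h ∘ e` on `A` is the same for
  -- every larger map, so a single visit to each task suffices.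
  let D : U ⊕ Task → Set {p : PartialHom L U U // p.dom.FG} :=
    Sum.elim (fun x => {p | x ∈ p.1.dom}) fun ⟨A, B, e, h⟩ => {p | A.1 ≤ p.1.dom ∧
      (p.1.MapsAlong ((↑) : A.1 → U) (h ∘ e) →
        ∃ ι : B.1 ↪[L] U, (∀ a, ι (e a) = a) ∧ p.1.MapsAlong ι h)}
  have hD : ∀ i, IsCofinal (D i) := by
    rintro (x | ⟨⟨A, hA⟩, ⟨B, hB⟩, e, h⟩) ⟨p, hp⟩
    · obtain ⟨q, hpq, hq, hxq⟩ := exists_partialHom_le_of_hap hU hap hp (fg_closure_singleton x)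
      exact ⟨⟨q, hq⟩, hxq (subset_closure rfl), hpq⟩
    · obtain ⟨q, hpq, hq, hAq, hsolve⟩ := exists_partialHom_le_solving hU hap aep hp hA hB e h
      exact ⟨⟨q, hq⟩, ⟨hAq, hsolve⟩, hpq⟩
  obtain ⟨c, hc, -, hcD⟩ := Order.exists_monotone_seq_forall_exists_mem
    ⟨⟨⊥, (⊥ : L.Substructure U).subtype.toHom⟩, fg_bot⟩ hD
  obtain ⟨u, hu⟩ := PartialHom.exists_hom_of_monotone (c := fun n => (c n).1)
    (fun _ _ hmn => hc hmn) fun x => hcD (.inl x)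
  refine ⟨u, hasExtensionProperty_of_substructures hU fun A B hA hB e h hcompat => ?_⟩
  obtain ⟨n, hAn, hn⟩ := hcD (.inr ⟨⟨A, hA⟩, ⟨B, hB⟩, e, h⟩)
  obtain ⟨ι, hιe, hι⟩ := hn ((PartialHom.mapsAlong_iff (hu n)).2 ⟨fun a => hAn a.2, hcompat⟩)
  exact ⟨ι, hιe, ((PartialHom.mapsAlong_iff (hu n)).1 hι).2⟩

theorem HasExtensionProperty.isUniversalHom (hU : IsFraisseLimit K U) {u : U →[L] U}
    (hu : HasExtensionProperty K u) : IsUniversalHom L K u := by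
  rintro A ⟨hcount, hage⟩ h
  obtain ⟨j₀⟩ := hU.nonempty_embedding (hage (age.fg_substructure fg_bot))
  have hf₀ : IsFGLift u h ⟨⊥, j₀.toHom.range, j₀.equivRange⟩ := ⟨fg_bot, fun x =>
    DFunLike.congr_fun (Subsingleton.elim (u.comp ((subtype _).toHom.comp j₀.equivRange.toHom))
      (h.comp (⊥ : L.Substructure A).subtype.toHom)) x⟩
  obtain ⟨e, he⟩ := PartialEquiv.exists_embedding_of_forth hf₀ fun f hf a =>
    hu.exists_isFGLift_le hage h hf a
  refine ⟨e, fun a => ?_⟩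
  obtain ⟨g, hg, ha, hga⟩ := he a
  rw [hga]
  exact hg.2 ⟨a, ha⟩

theorem HasExtensionProperty.isHomogeneousHom (hU : IsFraisseLimit K U) {u : U →[L] U}
    (hu : HasExtensionProperty K u) : IsHomogeneousHom L u := by
  intro S hS ι hι
  obtain ⟨α, hα₀, hα⟩ := PartialEquiv.exists_equiv_of_back_and_forth
    (P := IsFGLift u u) (f₀ := ⟨S, ι.toHom.range, ι.equivRange⟩)
    ⟨hS, fun x => by simpa [Embedding.equivRange_apply] using hι x⟩
    (fun f hf x => hu.exists_isFGLift_le hU.age.le u hf x)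
    fun f hf y => by
      obtain ⟨g, hg, hfg, hy⟩ := hu.exists_isFGLift_le hU.age.le u hf.symm y
      exact ⟨g.symm, hg.symm, PartialEquiv.symm_le_iff.1 hfg, hy⟩
  refine ⟨α, fun x => ?_, fun s => ?_⟩
  · obtain ⟨g, hg, hx, hgx⟩ := hα x
    rw [hgx]
    exact hg.2 ⟨x, hx⟩
  · rw [hα₀ s s.2]
    exact Embedding.equivRange_apply ι s

end UHomog

open UHomog FirstOrder FirstOrder.Language in
theorem statement9_general
    (L : FirstOrder.Language.{u, v})
    [Countable (Σ l, L.Functions l)]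
    (K : Set (Bundled.{w} L.Structure))
    (U : Type w) [L.Structure U] [Countable U] (hU : IsFraisseLimit K U) :
    (∃ u : U →[L] U, IsUniversalHom L K u ∧ IsHomogeneousHom L u) ↔
      (AmalgamatedExtension L K ∧ HAP L K) := by
  constructor
  · rintro ⟨u, huniv, hhomog⟩
    exact ⟨amalgamatedExtension_of_isUniversalHom hU huniv hhomog, hap_of_isUniversalHom hU huniv⟩
  · rintro ⟨aep, hap⟩
    obtain ⟨u, hu⟩ := exists_hasExtensionProperty hU hap aep
    exact ⟨u, hu.isUniversalHom hU, hu.isHomogeneousHom hU⟩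

open UHomog FirstOrder FirstOrder.Language in
/-- Proposition: the Fraïssé limit `U` of `K` has a universal homogeneous endomorphism if and
only if `K` has the amalgamated extension property and the homo amalgamation property (HAP). -/
theorem statement9
    (L : FirstOrder.Language.{u, v})
    [Countable (Σ l, L.Functions l)] [Countable (Σ l, L.Relations l)]
    (K : Set (Bundled.{w} L.Structure)) (hK : IsFraisse K)
    (U : Type w) [L.Structure U] [Countable U] (hU : IsFraisseLimit K U) :
    (∃ u : U →[L] U, IsUniversalHom L K u ∧ IsHomogeneousHom L u) ↔
      (AmalgamatedExtension L K ∧ HAP L K) :=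
  statement9_general L K U hU
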